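/- arXiv:1607.04604 — 3 statements merged into one kernel-verified Lean document; each statement's English description precedes it below -/
import Mathlib

section
/- Define Ftilde(x) = sum over i from 0 to infinity of (1/2^i) * Zigzag(2^i * x) for real x. Then for every positive natural number n and every natural number k with n <= 2^k, Ftilde(n/2^k) = sum over i from 1 to k of 2^(i-k) * Zigzag(n/2^i); in particular the infinite series reduces to a finite sum. -/
noncomputable def Zigzag (x : ℝ) : ℝ := min (x - ⌊x⌋) (⌈x⌉ - x)

noncomputable def Ftilde (x : ℝ) : ℝ := ∑' i : ℕ, (1 / 2 ^ i) * Zigzag (2 ^ i * x)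

/-! For `i ≥ k` the point `2 ^ i * (m / 2 ^ k)` is an integer, where `Zigzag` vanishes, so the
series defining `Ftilde` stops at `i = k`; reindexing by `i ↦ k - i` gives the stated sum. -/

@[simp]
lemma Zigzag_intCast (m : ℤ) : Zigzag m = 0 := by
  simp [Zigzag]

lemma two_pow_mul_div_two_pow {i k : ℕ} (h : i ≤ k) (x : ℝ) :
    2 ^ i * (x / 2 ^ k) = x / 2 ^ (k - i) := by
  rw [pow_sub₀ _ two_ne_zero h]
  field_simp

lemma Ftilde_eq_sum_range_of_intCast_div_two_pow (m : ℤ) (k : ℕ) :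
    Ftilde (m / 2 ^ k) = ∑ i ∈ Finset.range k, (1 / 2 ^ i) * Zigzag (2 ^ i * (m / 2 ^ k)) := by
  refine tsum_eq_sum fun i hi => ?_
  have hki : k ≤ i := by simpa using hi
  have hmem_int : (2 : ℝ) ^ i * (m / 2 ^ k) = ((m * 2 ^ (i - k) : ℤ) : ℝ) := by
    push_cast
    rw [pow_sub₀ _ two_ne_zero hki]
    field_simp
  rw [hmem_int, Zigzag_intCast, mul_zero]

lemma Ftilde_intCast_div_two_pow (m : ℤ) (k : ℕ) :
    Ftilde (m / 2 ^ k) = ∑ i ∈ Finset.Icc 1 k, (2 : ℝ) ^ ((i : ℤ) - k) * Zigzag (m / 2 ^ i) := by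
  rw [Ftilde_eq_sum_range_of_intCast_div_two_pow]
  refine Finset.sum_nbij' (k - ·) (k - ·) ?_ ?_ ?_ ?_ fun i hi => ?_
  iterate 4 · intro i hi; grind
  have hik : i ≤ k := (Finset.mem_range.mp hi).le
  rw [two_pow_mul_div_two_pow hik, Nat.cast_sub hik, sub_sub_cancel_left, zpow_neg, zpow_natCast,
    one_div]

theorem Ftilde_eq_finite_sum_general (n k : ℕ) :
    Ftilde ((n : ℝ) / 2 ^ k)
      = ∑ i ∈ Finset.Icc 1 k, (2 : ℝ) ^ ((i : ℤ) - k) * Zigzag ((n : ℝ) / 2 ^ i) := by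
  simpa only [Int.cast_natCast] using Ftilde_intCast_div_two_pow n k

theorem Ftilde_eq_finite_sum (n k : ℕ) (hn : 0 < n) (hnk : n ≤ 2 ^ k) :
    Ftilde ((n : ℝ) / 2 ^ k)
      = ∑ i ∈ Finset.Icc 1 k, (2 : ℝ) ^ ((i : ℤ) - k) * Zigzag ((n : ℝ) / 2 ^ i) :=
  Ftilde_eq_finite_sum_general n k
end

section
/- Let B : N -> N satisfy B(1) = 0 and B(n) = floor(n/2) + B(floor(n/2)) + B(ceil(n/2)) for n >= 2, and define the Blancmange function Ftilde(x) = sum over i from 0 to infinity of (1/2^i)*Zigzag(2^i * x). Then for every positive natural number n and every natural number k with n <= 2^k, Ftilde(n/2^k) = (n*k - 2*B(n))/2^k. -/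
lemma zigzag_nonneg (x : ℝ) : 0 ≤ Zigzag x := by
  simp only [Zigzag, le_min_iff]
  constructor
  · linarith [Int.floor_le x]
  · linarith [Int.le_ceil x]

lemma zigzag_le_half (x : ℝ) : Zigzag x ≤ 1 / 2 := by
  have h1 : (⌈x⌉ : ℝ) ≤ ⌊x⌋ + 1 := by exact_mod_cast Int.ceil_le_floor_add_one x
  have := min_le_add_of_nonneg_right (a := x - ⌊x⌋) (b := (⌈x⌉:ℝ) - x)
  rcases le_total (x - ⌊x⌋) ((⌈x⌉:ℝ) - x) with h | h
  · have : Zigzag x = x - ⌊x⌋ := min_eq_left h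
    rw [this]; linarith
  · have : Zigzag x = (⌈x⌉:ℝ) - x := min_eq_right h
    rw [this]; linarith

lemma zigzag_intCast (m : ℤ) : Zigzag (m : ℝ) = 0 := by
  simp [Zigzag]

lemma zigzag_int_sub (m : ℤ) (x : ℝ) : Zigzag ((m : ℝ) - x) = Zigzag x := by
  have hf : ⌊(m : ℝ) - x⌋ = m + ⌊-x⌋ := by
    rw [sub_eq_add_neg, Int.floor_intCast_add]
  have hc : ⌈(m : ℝ) - x⌉ = m + ⌈-x⌉ := by
    rw [sub_eq_add_neg, add_comm, Int.ceil_add_intCast, add_comm]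
  rw [Zigzag, Zigzag, hf, hc, Int.floor_neg, Int.ceil_neg, min_comm]
  push_cast
  ring_nf

lemma ftilde_summable (x : ℝ) :
    Summable (fun i : ℕ => (1 / 2 ^ i : ℝ) * Zigzag (2 ^ i * x)) := by
  refine Summable.of_nonneg_of_le ?_ ?_ summable_geometric_two
  · intro i
    exact mul_nonneg (by positivity) (zigzag_nonneg _)
  · intro i
    calc (1 / 2 ^ i : ℝ) * Zigzag (2 ^ i * x) ≤ (1 / 2 ^ i) * 1 := by
          apply mul_le_mul_of_nonneg_left _ (by positivity)
          linarith [zigzag_le_half (2 ^ i * x)]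
      _ = (1 / 2 : ℝ) ^ i := by rw [mul_one, div_pow, one_pow]

lemma ftilde_half (x : ℝ) : Ftilde x = Zigzag x + (1 / 2) * Ftilde (2 * x) := by
  rw [Ftilde, Summable.tsum_eq_zero_add (ftilde_summable x)]
  congr 1
  · norm_num
  · rw [Ftilde, ← tsum_mul_left]
    apply tsum_congr
    intro i
    have h1 : (2 : ℝ) ^ (i + 1) * x = 2 ^ i * (2 * x) := by ring
    rw [h1]
    ring

lemma ftilde_int (m : ℤ) : Ftilde (m : ℝ) = 0 := by
  rw [Ftilde]
  have : ∀ i : ℕ, (1 / 2 ^ i : ℝ) * Zigzag (2 ^ i * m) = 0 := by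
    intro i
    have : (2 : ℝ) ^ i * m = ((2 ^ i * m : ℤ) : ℝ) := by push_cast; ring
    rw [this, zigzag_intCast, mul_zero]
  simp only [this, tsum_zero]

lemma ftilde_one_sub (x : ℝ) : Ftilde (1 - x) = Ftilde x := by
  rw [Ftilde, Ftilde]
  apply tsum_congr
  intro i
  congr 1
  have h1 : (2 : ℝ) ^ i * (1 - x) = ((2 ^ i : ℤ) : ℝ) - 2 ^ i * x := by push_cast; ring
  rw [h1, zigzag_int_sub]

lemma zigzag_of_le_half (x : ℝ) (h0 : 0 ≤ x) (h1 : x ≤ 1 / 2) : Zigzag x = x := by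
  rcases eq_or_lt_of_le h0 with h | h
  · simp [Zigzag, ← h]
  · have hf : ⌊x⌋ = 0 := Int.floor_eq_zero_iff.mpr ⟨h0, by linarith⟩
    have hc : ⌈x⌉ = 1 := by
      rw [Int.ceil_eq_iff]
      constructor <;> push_cast <;> linarith
    rw [Zigzag, hf, hc]
    push_cast
    rw [min_eq_left (by linarith)]
    ring

lemma ceil_half (n : ℕ) : ((⌈(n : ℚ) / 2⌉).toNat) = (n + 1) / 2 := by
  rcases Nat.even_or_odd n with ⟨q, rfl⟩ | ⟨q, rfl⟩
  · have h1 : ((q + q : ℕ) : ℚ) / 2 = ((q : ℤ) : ℚ) := by push_cast; ring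
    rw [h1, Int.ceil_intCast]
    omega
  · have h1 : ((2 * q + 1 : ℕ) : ℚ) / 2 = 1 / 2 + ((q : ℤ) : ℚ) := by push_cast; ring
    have h2 : ⌈(1 / 2 : ℚ)⌉ = 1 := by
      rw [Int.ceil_eq_iff] <;> norm_num
    rw [h1, Int.ceil_add_intCast, h2]
    omega

section Bsec

variable (B : ℕ → ℕ) (hB1 : B 1 = 0)
    (hB : ∀ n, 2 ≤ n → B n = n / 2 + B (n / 2) + B ((⌈(n : ℚ) / 2⌉).toNat))

include hB in
lemma hB' : ∀ n, 2 ≤ n → B n = n / 2 + B (n / 2) + B ((n + 1) / 2) := by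
  intro n hn
  rw [hB n hn, ceil_half]

include hB1 hB in
lemma B_pow : ∀ k : ℕ, B (2 ^ (k + 1)) = (k + 1) * 2 ^ k := by
  intro k
  induction k with
  | zero =>
    show B 2 = 1
    rw [hB' B hB 2 (by norm_num)]; norm_num [hB1]
  | succ k ih =>
    have h2 : (2 : ℕ) ≤ 2 ^ (k + 2) := by
      calc (2:ℕ) = 2 ^ 1 := rfl
        _ ≤ 2 ^ (k + 2) := Nat.pow_le_pow_right (by norm_num) (by omega)
    have hd : 2 ^ (k + 2) / 2 = 2 ^ (k + 1) := by rw [pow_succ]; omega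
    have hd2 : (2 ^ (k + 2) + 1) / 2 = 2 ^ (k + 1) := by rw [pow_succ]; omega
    rw [hB' B hB _ h2, hd, hd2, ih, pow_succ]
    ring

include hB1 hB in
lemma B_sym : ∀ k n m : ℕ, n + m = 2 ^ (k + 1) → 2 ^ k ≤ n → 1 ≤ m →
    (B n : ℤ) = B m + (k + 1) * ((n : ℤ) - 2 ^ k) := by
  intro k
  induction k with
  | zero =>
    intro n m h hn hm
    norm_num at h hn
    have h1 : n = 1 := by omega
    have h2 : m = 1 := by omega
    subst h1; subst h2
    norm_num
  | succ k ih =>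
    intro n m h hn hm
    have hp : (2:ℕ) ^ (k + 2) = 2 * 2 ^ (k + 1) := by ring
    have hp1 : (2:ℕ) ^ (k + 1) = 2 * 2 ^ k := by ring
    have hq : 0 < (2:ℕ) ^ (k + 1) := pow_pos (by norm_num) _
    have hq0 : 0 < (2:ℕ) ^ k := pow_pos (by norm_num) _
    rcases eq_or_lt_of_le hn with heq | hlt
    · -- n = 2^(k+1) = m
      have hmn : m = n := by omega
      have hz : (n : ℤ) = 2 ^ (k + 1) := by exact_mod_cast heq.symm
      rw [hmn, hz]; ring
    · by_cases hm1 : m = 1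
      · subst hm1
        obtain ⟨w, hw⟩ : ∃ w : ℕ, w + 1 = 2 ^ (k + 1) := ⟨2 ^ (k + 1) - 1, by omega⟩
        have hn2 : 2 ≤ n := by omega
        have ha : n / 2 = w := by omega
        have hb : (n + 1) / 2 = 2 ^ (k + 1) := by omega
        have h1 := hB' B hB n hn2
        rw [ha, hb] at h1
        have z1 : (B n : ℤ) = w + B w + B (2 ^ (k + 1)) := by exact_mod_cast h1
        have ih1 := ih w 1 (by omega) (by omega) le_rfl
        have zp : (B (2 ^ (k + 1)) : ℤ) = (k + 1) * 2 ^ k := by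
          exact_mod_cast B_pow B hB1 hB k
        have zw : (w : ℤ) + 1 = 2 ^ (k + 1) := by exact_mod_cast hw
        have znn : (n : ℤ) + 1 = 2 ^ (k + 2) := by exact_mod_cast h
        rw [hB1] at ih1 ⊢
        push_cast at ih1 ⊢
        linear_combination z1 + ih1 + zp + ((k:ℤ) + 2) * zw - ((k:ℤ) + 2) * znn
      · -- general case: 2 ≤ m, 2^(k+1) < n
        have hn2 : 2 ≤ n := by omega
        have hm2 : 2 ≤ m := by omega
        have h1 := hB' B hB n hn2
        have h2 := hB' B hB m hm2
        have iha := ih (n / 2) ((m + 1) / 2) (by omega) (by omega) (by omega)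
        have ihb := ih ((n + 1) / 2) (m / 2) (by omega) (by omega) (by omega)
        have z1 : (B n : ℤ) = (n / 2 : ℕ) + B (n / 2) + B ((n + 1) / 2) := by
          exact_mod_cast h1
        have z2 : (B m : ℤ) = (m / 2 : ℕ) + B (m / 2) + B ((m + 1) / 2) := by
          exact_mod_cast h2
        have za' : n / 2 + (m + 1) / 2 = 2 ^ (k + 1) := by omega
        have zb' : (n + 1) / 2 + m / 2 = 2 ^ (k + 1) := by omega
        have znab' : n = n / 2 + (n + 1) / 2 := by omega
        have zm' : m = m / 2 + (m + 1) / 2 := by omega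
        have za : ((n / 2 : ℕ) : ℤ) + (((m + 1) / 2 : ℕ) : ℤ) = 2 ^ (k + 1) := by
          exact_mod_cast za'
        have zb : (((n + 1) / 2 : ℕ) : ℤ) + ((m / 2 : ℕ) : ℤ) = 2 ^ (k + 1) := by
          exact_mod_cast zb'
        have zn : (n : ℤ) + m = 2 ^ (k + 2) := by exact_mod_cast h
        have znab : (n : ℤ) = ((n / 2 : ℕ) : ℤ) + (((n + 1) / 2 : ℕ) : ℤ) := by
          exact_mod_cast znab'
        have zm : (m : ℤ) = ((m / 2 : ℕ) : ℤ) + (((m + 1) / 2 : ℕ) : ℤ) := by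
          exact_mod_cast zm'
        push_cast
        linear_combination z1 - z2 + iha + ihb + za - zn + zm - ((k:ℤ) + 1) * znab

end Bsec

theorem Ftilde_eq_B (B : ℕ → ℕ) (hB1 : B 1 = 0)
    (hB : ∀ n, 2 ≤ n → B n = n / 2 + B (n / 2) + B ((⌈(n : ℚ) / 2⌉).toNat)) :
    ∀ n k : ℕ, 0 < n → n ≤ 2 ^ k →
      Ftilde ((n : ℝ) / 2 ^ k) = ((n : ℝ) * k - 2 * B n) / 2 ^ k := by
  intro n k
  induction k generalizing n with
  | zero =>
    intro hn hnk
    norm_num at hnk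
    have h1 : n = 1 := by omega
    subst h1
    have h2 : ((1 : ℕ) : ℝ) / 2 ^ 0 = ((1 : ℤ) : ℝ) := by norm_num
    rw [h2, ftilde_int 1]
    norm_num [hB1]
  | succ k ih =>
    intro hn hnk
    have hpR : ((2 : ℝ)) ^ (k + 1) = 2 ^ k * 2 := by ring
    have key : ∀ j : ℕ, 0 < j → j ≤ 2 ^ k →
        Ftilde ((j : ℝ) / 2 ^ (k + 1)) = ((j : ℝ) * ((k + 1 : ℕ) : ℝ) - 2 * B j) / 2 ^ (k + 1) := by
      intro j hj hjk
      have hjR : (j : ℝ) ≤ 2 ^ k := by exact_mod_cast hjk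
      have hx1 : (0 : ℝ) ≤ (j : ℝ) / 2 ^ (k + 1) := by positivity
      have hx2 : (j : ℝ) / 2 ^ (k + 1) ≤ 1 / 2 := by
        rw [div_le_div_iff₀ (by positivity) (by norm_num)]
        rw [hpR]; nlinarith
      have h2x : 2 * ((j : ℝ) / 2 ^ (k + 1)) = (j : ℝ) / 2 ^ k := by
        rw [hpR]; field_simp
      rw [ftilde_half, zigzag_of_le_half _ hx1 hx2, h2x, ih j hj hjk]
      push_cast
      field_simp
      ring
    rcases le_or_gt n (2 ^ k) with hle | hgt
    · exact key n hn hle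
    · rcases eq_or_lt_of_le hnk with heq | hlt
      · subst heq
        have h1 : ((2 ^ (k + 1) : ℕ) : ℝ) / 2 ^ (k + 1) = ((1 : ℤ) : ℝ) := by
          push_cast
          rw [div_self (by positivity)]
        rw [h1, ftilde_int 1, B_pow B hB1 hB k]
        push_cast
        rw [pow_succ]
        ring
      · obtain ⟨m, hm⟩ : ∃ m : ℕ, n + m = 2 ^ (k + 1) := ⟨2 ^ (k + 1) - n, by omega⟩
        have hp1 : (2 : ℕ) ^ (k + 1) = 2 * 2 ^ k := by ring
        have hm1 : 1 ≤ m := by omega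
        have hmk : m ≤ 2 ^ k := by omega
        have hmr : (n : ℝ) + m = 2 ^ (k + 1) := by exact_mod_cast hm
        have hsym : (n : ℝ) / 2 ^ (k + 1) = 1 - (m : ℝ) / 2 ^ (k + 1) := by
          field_simp
          linarith
        rw [hsym, ftilde_one_sub, key m hm1 hmk]
        have hBs := B_sym B hB1 hB k n m hm (le_of_lt hgt) hm1
        have hBr : ((B n : ℝ)) = B m + ((k : ℝ) + 1) * ((n : ℝ) - 2 ^ k) := by
          exact_mod_cast hBs
        push_cast
        rw [div_eq_div_iff (by positivity) (by positivity)]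
        linear_combination (2 ^ (k+1) : ℝ) * (2 * hBr + ((k : ℝ) + 1) * hmr)
end

section
/- Define Ftilde(x) = sum over i from 0 to infinity of (1/2^i)*Zigzag(2^i * x). Then Ftilde(1/3) = 2/3, and for every positive natural number k, Ftilde(1/2^k) = k/2^k. -/
lemma zigzag_int_add (n : ℤ) (x : ℝ) : Zigzag (n + x) = Zigzag x := by
  rw [add_comm]
  simp only [Zigzag, Int.floor_add_intCast, Int.ceil_add_intCast]
  push_cast
  ring_nf

lemma zigzag_small {x : ℝ} (h1 : 0 < x) (h2 : x ≤ 1/2) : Zigzag x = x := by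
  have hf : ⌊x⌋ = 0 := Int.floor_eq_zero_iff.mpr ⟨h1.le, by linarith⟩
  have hc : ⌈x⌉ = 1 := by
    rw [Int.ceil_eq_iff]
    constructor <;> push_cast <;> linarith
  simp only [Zigzag, hf, hc]
  push_cast
  rw [min_eq_left (by linarith)]
  ring

lemma zigzag_third : Zigzag (1/3) = 1/3 := by
  rw [zigzag_small (by norm_num) (by norm_num)]

lemma zigzag_two_third : Zigzag (2/3) = 1/3 := by
  have hf : ⌊(2/3:ℝ)⌋ = 0 := Int.floor_eq_zero_iff.mpr ⟨by norm_num, by norm_num⟩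
  have hc : ⌈(2/3:ℝ)⌉ = 1 := by
    rw [Int.ceil_eq_iff] <;> norm_num
  simp only [Zigzag, hf, hc]
  norm_num

lemma zigzag_int (n : ℤ) : Zigzag n = 0 := by
  simp [Zigzag]

lemma pow_third (i : ℕ) : Zigzag (2 ^ i * (1/3)) = 1/3 := by
  have key : ∀ i : ℕ, ∃ n : ℤ, (2:ℝ)^i * (1/3) = n + 1/3 ∨ (2:ℝ)^i * (1/3) = n + 2/3 := by
    intro i
    induction i with
    | zero => exact ⟨0, Or.inl (by norm_num)⟩
    | succ i ih =>
      obtain ⟨n, h | h⟩ := ih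
      · exact ⟨2*n, Or.inr (by push_cast; rw [pow_succ]; push_cast at h ⊢; linarith)⟩
      · exact ⟨2*n+1, Or.inl (by push_cast; rw [pow_succ]; push_cast at h ⊢; linarith)⟩
  obtain ⟨n, h | h⟩ := key i
  · rw [h, zigzag_int_add, zigzag_third]
  · rw [h, zigzag_int_add, zigzag_two_third]

theorem Ftilde_special_values :
    Ftilde (1 / 3) = 2 / 3 ∧
    ∀ k : ℕ, 0 < k → Ftilde (1 / 2 ^ k) = (k : ℝ) / 2 ^ k := by
  constructor
  · unfold Ftilde
    have : ∀ i : ℕ, (1 / 2 ^ i : ℝ) * Zigzag (2 ^ i * (1/3)) = (1/3) * (1/2)^i := by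
      intro i
      rw [pow_third]
      rw [div_pow]
      ring
    rw [tsum_congr this, tsum_mul_left, tsum_geometric_two]
    norm_num
  · intro k hk
    unfold Ftilde
    rw [tsum_eq_sum (s := Finset.range k) ?h0]
    · have hterm : ∀ i ∈ Finset.range k, (1 / 2 ^ i : ℝ) * Zigzag (2 ^ i * (1 / 2 ^ k)) = 1 / 2 ^ k := by
        intro i hi
        rw [Finset.mem_range] at hi
        have hpow : (2:ℝ) ^ i * 2 ^ (k - i) = 2 ^ k := by
          rw [← pow_add]; congr 1; omega
        have hx : (2:ℝ) ^ i * (1 / 2 ^ k) = 1 / 2 ^ (k - i) := by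
          field_simp
          linarith
        rw [hx, zigzag_small (by positivity) ?hle]
        · field_simp
          linarith
        · have h2 : (2:ℝ)^1 ≤ 2 ^ (k - i) :=
            pow_le_pow_right₀ (by norm_num) (by omega)
          rw [div_le_div_iff₀ (by positivity) (by norm_num)]
          norm_num at h2 ⊢
          linarith
      rw [Finset.sum_congr rfl hterm, Finset.sum_const, Finset.card_range, nsmul_eq_mul]
      ring
    · intro i hi
      rw [Finset.mem_range, not_lt] at hi
      have hx : (2:ℝ) ^ i * (1 / 2 ^ k) = ((2 ^ (i - k) : ℤ) : ℝ) := by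
        push_cast
        rw [mul_one_div, div_eq_iff (by positivity : (2:ℝ) ^ k ≠ 0)]
        rw [← pow_add]; congr 1; omega
      rw [hx, zigzag_int, mul_zero]
end
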